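/- There is an absolute constant C such that for every complex Banach space E and every function f : Ā → E which is continuous on Ā and analytic on Ω, the series g(z) = Σ_{k≥0} f̂(k) z^k converges for all |z| < e, the function g extends to a continuous function on the closed disk {z : |z| ≤ e}, and sup_{|z|≤e} ‖g(z)‖_E ≤ C · sup_{z∈Ā} ‖f(z)‖_E. -/

import Mathlib

open MeasureTheory Filter Topology

/-- The closed annulus `Ā = {z : 1 ≤ |z| ≤ e}`. -/
noncomputable def closedAnnulus : Set ℂ :=
  {z : ℂ | 1 ≤ ‖z‖ ∧ ‖z‖ ≤ Real.exp 1}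

/-- The open annulus `Ω = {z : 1 < |z| < e}`. -/
noncomputable def openAnnulus : Set ℂ :=
  {z : ℂ | 1 < ‖z‖ ∧ ‖z‖ < Real.exp 1}

/-- The `k`-th Fourier–Laurent coefficient `f̂(k) = ∫₀^{2π} f(e^{it}) e^{-ikt} dt/2π`
of a function on the annulus. -/
noncomputable def fourierLaurent {E : Type*} [NormedAddCommGroup E] [NormedSpace ℂ E]
    (f : ℂ → E) (k : ℤ) : E :=
  (((2 * Real.pi)⁻¹ : ℝ) : ℂ) •
    ∫ t in (0:ℝ)..(2 * Real.pi),
      Complex.exp (-(Complex.I * k * t)) • f (Complex.exp (Complex.I * t))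

universe u


/-!
By Cauchy's theorem on the annulus, the coefficients of the Cauchy power series of `f` on the
circle `|w| = R` do not depend on `R ∈ [1, e]`, and for `R = 1` they are the Fourier–Laurent
coefficients `f̂(k)`, `k ≥ 0`. So on the open disk the series sums to the Cauchy integral of `f`
over the outer circle. In the open annulus, Cauchy's formula writes that integral as `f` plus the
Cauchy integral over the inner circle, an expression that stays continuous up to `|z| = e` and
provides the extension. Both Cauchy integrals are bounded by `R M / |R - |z||`: the outer one is
used for `|z| ≤ 2`, the inner one for `|z| ≥ 2`.
-/

open Complex Metric Set
open scoped Real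

section CauchyIntegral

variable {E : Type*} [NormedAddCommGroup E] [NormedSpace ℂ E] {f : ℂ → E} {c : ℂ} {r R : ℝ}

noncomputable def cauchyIntegral (f : ℂ → E) (c : ℂ) (R : ℝ) (w : ℂ) : E :=
  (2 * π * I : ℂ)⁻¹ • ∮ z in C(c, R), (z - w)⁻¹ • f z

theorem continuousOn_cauchyIntegral (hR : 0 ≤ R) (hf : ContinuousOn f (sphere c R)) :
    ContinuousOn (cauchyIntegral f c R) (sphere c R)ᶜ := by
  have hfθ : Continuous fun θ => f (circleMap c R θ) :=
    hf.comp_continuous (continuous_circleMap c R) (circleMap_mem_sphere c hR)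
  rw [continuousOn_iff_continuous_domRestrict]
  refine Continuous.const_smul ?_ _
  refine intervalIntegral.continuous_parametric_intervalIntegral_of_continuous' ?_ _ _
  simp only [deriv_circleMap]
  refine (((continuous_circleMap 0 R).comp continuous_snd).mul continuous_const).smul <|
    (Continuous.inv₀ (((continuous_circleMap c R).comp continuous_snd).sub
      (continuous_subtype_val.comp continuous_fst)) ?_).smul (hfθ.comp continuous_snd)
  rintro ⟨⟨w, hw⟩, θ⟩ h
  exact hw ((sub_eq_zero.1 h : circleMap c R θ = w) ▸ circleMap_mem_sphere c hR θ)

theorem norm_cauchyIntegral_le {w : ℂ} {M : ℝ} (hR : 0 ≤ R) (hf : ∀ z ∈ sphere c R, ‖f z‖ ≤ M)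
    (hw : w ∉ sphere c R) : ‖cauchyIntegral f c R w‖ ≤ R * M / |R - dist w c| := by
  have hpos : 0 < |R - dist w c| := abs_pos.2 (sub_ne_zero.2 (Ne.symm hw))
  have hbound : ∀ z ∈ sphere c R, ‖(z - w)⁻¹ • f z‖ ≤ |R - dist w c|⁻¹ * M := by
    intro z hz
    have hM : 0 ≤ M := (norm_nonneg _).trans (hf z hz)
    have hdist : |R - dist w c| ≤ ‖z - w‖ := by
      rw [← mem_sphere.1 hz, ← dist_eq_norm]
      exact abs_dist_sub_le z w c
    rw [norm_smul, norm_inv]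
    exact mul_le_mul (inv_anti₀ hpos hdist) (hf z hz) (norm_nonneg _) (by positivity)
  have hI := circleIntegral.norm_integral_le_of_norm_le_const hR hbound
  rw [cauchyIntegral, norm_smul, norm_inv, norm_mul, norm_mul, norm_I, Complex.norm_ofNat,
    Complex.norm_real, Real.norm_of_nonneg Real.pi_pos.le, mul_one]
  calc (2 * π)⁻¹ * ‖∮ z in C(c, R), (z - w)⁻¹ • f z‖
      ≤ (2 * π)⁻¹ * (2 * π * R * (|R - dist w c|⁻¹ * M)) := by gcongr
    _ = R * M / |R - dist w c| := by field_simp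

theorem sphere_subset_closedBall_sdiff_ball {ρ : ℝ} (hr : r ≤ ρ) (hR : ρ ≤ R) :
    sphere c ρ ⊆ closedBall c R \ ball c r := fun _ hz =>
  ⟨(mem_sphere.1 hz).trans_le hR, fun h => (mem_ball.1 h).not_ge ((mem_sphere.1 hz).symm ▸ hr)⟩

theorem cauchyPowerSeries_eq_of_differentiableOn_annulus (h0 : 0 < r) (hle : r ≤ R)
    (hc : ContinuousOn f (closedBall c R \ ball c r))
    (hd : DifferentiableOn ℂ f (ball c R \ closedBall c r)) :
    cauchyPowerSeries f c R = cauchyPowerSeries f c r := by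
  have hc0 : ∀ z ∈ closedBall c R \ ball c r, z - c ≠ 0 := fun z hz =>
    sub_ne_zero.2 fun h => hz.2 (h ▸ mem_ball_self h0)
  have hopen : IsOpen (ball c R \ closedBall c r) := isOpen_ball.sdiff isClosed_closedBall
  ext n : 1
  simp only [cauchyPowerSeries]
  congr 2
  refine circleIntegral_eq_of_differentiable_on_annulus_off_countable h0 hle countable_empty
    ?_ fun z hz => ?_
  · have hinv : ContinuousOn (fun z => (z - c)⁻¹) (closedBall c R \ ball c r) :=
      (continuousOn_id.sub continuousOn_const).inv₀ hc0
    exact (hinv.pow n).smul (hinv.smul hc)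
  · have hz0 := hc0 z ⟨ball_subset_closedBall hz.1.1, fun h => hz.1.2 (ball_subset_closedBall h)⟩
    have hinv : DifferentiableAt ℂ (fun z => (z - c)⁻¹) z :=
      (differentiableAt_id.sub_const c).inv hz0
    exact (hinv.pow n).smul (hinv.smul (hd.differentiableAt (hopen.mem_nhds hz.1)))

theorem cauchyPowerSeries_coeff_eq_fourierLaurent (f : ℂ → E) (n : ℕ) :
    (cauchyPowerSeries f 0 1).coeff n = fourierLaurent f n := by
  have hintegrand : ∀ θ : ℝ, (circleMap 0 1 θ * I) • (circleMap 0 1 θ)⁻¹ ^ n •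
      (circleMap 0 1 θ)⁻¹ • f (circleMap 0 1 θ) =
        I • cexp (-(I * n * θ)) • f (cexp (I * θ)) := by
    intro θ
    have hθ : circleMap 0 1 θ = cexp (I * θ) := by simp [circleMap, mul_comm]
    rw [hθ, smul_smul, smul_smul, smul_smul, ← exp_neg, ← exp_nat_mul,
      show (n : ℂ) * -(I * θ) = -(I * n * θ) by ring, exp_neg (I * θ)]
    congr 1
    field_simp
  simp only [FormalMultilinearSeries.coeff, cauchyPowerSeries,
    ContinuousMultilinearMap.mkPiRing_apply, Pi.one_apply, Finset.prod_const_one, one_smul,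
    sub_zero, circleIntegral, deriv_circleMap, hintegrand]
  rw [intervalIntegral.integral_smul, smul_smul, fourierLaurent]
  congr 1
  push_cast
  field_simp

variable [CompleteSpace E]

theorem circleIntegral_dslope {w : ℂ} (hR : 0 ≤ R) (hw : w ∉ sphere c R)
    (hf : ContinuousOn f (sphere c R)) :
    (∮ z in C(c, R), dslope f w z) =
      (∮ z in C(c, R), (z - w)⁻¹ • f z) - (∮ z in C(c, R), (z - w)⁻¹) • f w := by
  have hne : ∀ z ∈ sphere c R, z - w ≠ 0 := fun z hz => sub_ne_zero.2 fun h => hw (h ▸ hz)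
  have hinv : ContinuousOn (fun z => (z - w)⁻¹) (sphere c R) :=
    (continuousOn_id.sub continuousOn_const).inv₀ hne
  have h₁ : CircleIntegrable (fun z => (z - w)⁻¹ • f z) c R := (hinv.smul hf).circleIntegrable hR
  have h₂ : CircleIntegrable (fun z => (z - w)⁻¹ • f w) c R :=
    (hinv.smul continuousOn_const).circleIntegrable hR
  calc (∮ z in C(c, R), dslope f w z)
      = ∮ z in C(c, R), ((z - w)⁻¹ • f z - (z - w)⁻¹ • f w) :=
        circleIntegral.integral_congr hR fun z hz => by
          rw [dslope_of_ne _ (sub_ne_zero.1 (hne z hz)), slope_def_module, smul_sub]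
    _ = _ := by rw [circleIntegral.integral_sub h₁ h₂, circleIntegral.integral_smul_const]

theorem circleIntegral_sub_inv_of_notMem_closedBall {w : ℂ} (hr : 0 ≤ r)
    (hw : w ∉ closedBall c r) : (∮ z in C(c, r), (z - w)⁻¹) = 0 := by
  have hne : ∀ z ∈ closedBall c r, z - w ≠ 0 := fun z hz => sub_ne_zero.2 fun h => hw (h ▸ hz)
  exact circleIntegral_eq_zero_of_differentiable_on_off_countable hr countable_empty
    ((continuousOn_id.sub continuousOn_const).inv₀ hne) fun z hz =>
      (differentiableAt_id.sub_const w).inv (hne z (ball_subset_closedBall hz.1))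

theorem cauchyIntegral_eq_add_of_differentiableOn_annulus {w : ℂ} (h0 : 0 < r)
    (hw : w ∈ ball c R \ closedBall c r) (hc : ContinuousOn f (closedBall c R \ ball c r))
    (hd : DifferentiableOn ℂ f (ball c R \ closedBall c r)) :
    cauchyIntegral f c R w = f w + cauchyIntegral f c r w := by
  have hopen : IsOpen (ball c R \ closedBall c r) := isOpen_ball.sdiff isClosed_closedBall
  have hnhds : closedBall c R \ ball c r ∈ 𝓝 w := mem_of_superset (hopen.mem_nhds hw)
    (sdiff_subset_sdiff ball_subset_closedBall ball_subset_closedBall)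
  have hle : r ≤ R := (not_le.1 hw.2).le.trans (mem_ball.1 hw.1).le
  -- Cauchy's theorem on the annulus, applied to the difference quotient of `f` at `w`
  have hcF : ContinuousOn (dslope f w) (closedBall c R \ ball c r) :=
    (continuousOn_dslope hnhds).2 ⟨hc, hd.differentiableAt (hopen.mem_nhds hw)⟩
  have hdF : DifferentiableOn ℂ (dslope f w) (ball c R \ closedBall c r) :=
    (Complex.differentiableOn_dslope (hopen.mem_nhds hw)).2 hd
  have hF := circleIntegral_eq_of_differentiable_on_annulus_off_countable h0 hle countable_empty
    hcF fun z hz => hdF.differentiableAt (hopen.mem_nhds hz.1)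
  rw [circleIntegral_dslope (h0.le.trans hle) (ne_of_lt hw.1 ∘ mem_sphere.1)
      (hc.mono (sphere_subset_closedBall_sdiff_ball hle le_rfl)),
    circleIntegral_dslope h0.le (fun h => hw.2 (sphere_subset_closedBall h))
      (hc.mono (sphere_subset_closedBall_sdiff_ball le_rfl hle)),
    circleIntegral.integral_sub_inv_of_mem_ball hw.1,
    circleIntegral_sub_inv_of_notMem_closedBall h0.le hw.2, zero_smul, sub_zero,
    sub_eq_iff_eq_add] at hF
  have h2πI : (2 * π * I : ℂ) ≠ 0 := by simp [Real.pi_ne_zero, I_ne_zero]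
  rw [cauchyIntegral, cauchyIntegral, hF, smul_add, inv_smul_smul₀ h2πI, add_comm]

end CauchyIntegral

theorem closedAnnulus_eq : closedAnnulus = closedBall 0 (Real.exp 1) \ ball 0 1 := by
  ext z
  simp [closedAnnulus, and_comm]

theorem openAnnulus_eq : openAnnulus = ball 0 (Real.exp 1) \ closedBall 0 1 := by
  ext z
  simp [openAnnulus, and_comm]

section RieszProjection

variable {E : Type*} [NormedAddCommGroup E] [NormedSpace ℂ E] {f : ℂ → E}

/-- The paper's `ℛf`. On the outer circle, where the Cauchy integral over that circle is not
defined, its value is dictated by the splitting `ℛf = f + cauchyIntegral f 0 1` that holds in the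
open annulus (`rieszProjection_eq_add`). -/
noncomputable def rieszProjection (f : ℂ → E) (z : ℂ) : E :=
  if ‖z‖ < Real.exp 1 then cauchyIntegral f 0 (Real.exp 1) z else f z + cauchyIntegral f 0 1 z

variable (hc : ContinuousOn f closedAnnulus) (hd : DifferentiableOn ℂ f openAnnulus)
include hc hd

theorem hasSum_rieszProjection {z : ℂ} (hz : ‖z‖ < Real.exp 1) :
    HasSum (fun k : ℕ => z ^ k • fourierLaurent f k) (rieszProjection f z) := by
  have he₁ : 1 ≤ Real.exp 1 := Real.one_le_exp zero_le_one
  rw [closedAnnulus_eq] at hc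
  rw [openAnnulus_eq] at hd
  have hsum := hasSum_cauchyPowerSeries_integral ((hc.mono
    (sphere_subset_closedBall_sdiff_ball he₁ le_rfl)).circleIntegrable (Real.exp_pos 1).le) hz
  simp only [FormalMultilinearSeries.apply_eq_pow_smul_coeff, zero_add,
    cauchyPowerSeries_eq_of_differentiableOn_annulus one_pos he₁ hc hd,
    cauchyPowerSeries_coeff_eq_fourierLaurent] at hsum
  rwa [rieszProjection, if_pos hz]

variable [CompleteSpace E]

theorem rieszProjection_eq_add {z : ℂ} (hz₁ : 1 < ‖z‖) (hz : ‖z‖ ≤ Real.exp 1) :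
    rieszProjection f z = f z + cauchyIntegral f 0 1 z := by
  rcases hz.lt_or_eq with hlt | heq
  · rw [closedAnnulus_eq] at hc
    rw [openAnnulus_eq] at hd
    rw [rieszProjection, if_pos hlt]
    exact cauchyIntegral_eq_add_of_differentiableOn_annulus one_pos
      ⟨mem_ball_zero_iff.2 hlt, by simpa using hz₁⟩ hc hd
  · rw [rieszProjection, if_neg heq.not_lt]

theorem continuousOn_rieszProjection :
    ContinuousOn (rieszProjection f) (closedBall 0 (Real.exp 1)) := by
  have he₁ : 1 ≤ Real.exp 1 := Real.one_le_exp zero_le_one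
  have hc' := closedAnnulus_eq ▸ hc
  intro z hz
  rw [mem_closedBall_zero_iff] at hz
  rcases hz.lt_or_eq with hlt | heq
  · have hev : cauchyIntegral f 0 (Real.exp 1) =ᶠ[𝓝 z] rieszProjection f :=
      eventually_of_mem (isOpen_ball.mem_nhds (mem_ball_zero_iff.2 hlt)) fun w hw =>
        (if_pos (mem_ball_zero_iff.1 hw)).symm
    refine (((continuousOn_cauchyIntegral (Real.exp_pos 1).le
      (hc'.mono (sphere_subset_closedBall_sdiff_ball he₁ le_rfl))).continuousAt
        (isClosed_sphere.isOpen_compl.mem_nhds ?_)).congr hev).continuousWithinAt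
    simpa using hlt.ne
  · have h₁ : 1 < ‖z‖ := heq ▸ Real.one_lt_exp_iff.2 one_pos
    have hout : IsOpen {w : ℂ | 1 < ‖w‖} := isOpen_lt continuous_const continuous_norm
    have hA : closedAnnulus ∈ 𝓝[closedBall 0 (Real.exp 1)] z :=
      mem_nhdsWithin.2 ⟨_, hout, h₁, fun w hw => ⟨hw.1.le, mem_closedBall_zero_iff.1 hw.2⟩⟩
    have hev : (fun w => f w + cauchyIntegral f 0 1 w) =ᶠ[𝓝[closedBall 0 (Real.exp 1)] z]
        rieszProjection f := by
      filter_upwards [self_mem_nhdsWithin, nhdsWithin_le_nhds (hout.mem_nhds h₁)] with w hw hw₁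
      exact (rieszProjection_eq_add hc hd hw₁ (mem_closedBall_zero_iff.1 hw)).symm
    refine ContinuousWithinAt.congr_of_eventuallyEq ?_ hev.symm
      (rieszProjection_eq_add hc hd h₁ heq.le)
    refine ((hc z ⟨h₁.le, heq.le⟩).mono_of_mem_nhdsWithin hA).add
      ((continuousOn_cauchyIntegral zero_le_one
        (hc'.mono (sphere_subset_closedBall_sdiff_ball le_rfl he₁))).continuousAt
          (isClosed_sphere.isOpen_compl.mem_nhds ?_)).continuousWithinAt
    simpa using h₁.ne'

theorem norm_rieszProjection_le {M : ℝ} (hM : ∀ z ∈ closedAnnulus, ‖f z‖ ≤ M) {z : ℂ}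
    (hz : ‖z‖ ≤ Real.exp 1) : ‖rieszProjection f z‖ ≤ 4 * M := by
  have he₁ : 1 ≤ Real.exp 1 := Real.one_le_exp zero_le_one
  have he : 8 / 3 < Real.exp 1 := by linarith [Real.exp_one_gt_d9]
  have hM₀ : 0 ≤ M := (norm_nonneg _).trans (hM 1 ⟨by simp, by simp [he₁]⟩)
  have hMsphere : ∀ R, 1 ≤ R → R ≤ Real.exp 1 → ∀ w ∈ sphere (0 : ℂ) R, ‖f w‖ ≤ M :=
    fun R h₁ hR w hw => hM w (closedAnnulus_eq ▸ sphere_subset_closedBall_sdiff_ball h₁ hR hw)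
  rcases le_or_gt ‖z‖ 2 with hz₂ | hz₂
  · -- `e M / (e - 2) ≤ 4 M` because `e ≥ 8 / 3`
    have hlt : ‖z‖ < Real.exp 1 := by linarith
    have h := norm_cauchyIntegral_le (Real.exp_pos 1).le (hMsphere _ he₁ le_rfl) (w := z)
      (by simpa using hlt.ne)
    rw [dist_zero_right, abs_of_pos (sub_pos.2 hlt)] at h
    rw [rieszProjection, if_pos hlt]
    refine h.trans ((div_le_iff₀ (sub_pos.2 hlt)).2 ?_)
    nlinarith
  · have h := norm_cauchyIntegral_le zero_le_one (hMsphere _ le_rfl he₁) (w := z)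
      (by simp; linarith)
    rw [dist_zero_right, abs_sub_comm, abs_of_pos (by linarith), one_mul] at h
    rw [rieszProjection_eq_add hc hd (by linarith) hz]
    calc ‖f z + cauchyIntegral f 0 1 z‖ ≤ ‖f z‖ + ‖cauchyIntegral f 0 1 z‖ := norm_add_le _ _
      _ ≤ M + M := by
        gcongr
        · exact hM z ⟨by linarith, hz⟩
        · exact h.trans (div_le_self hM₀ (by linarith))
      _ ≤ 4 * M := by linarith

end RieszProjection

theorem stmt9 :
    ∃ C : ℝ, ∀ (E : Type u) [NormedAddCommGroup E] [NormedSpace ℂ E] [CompleteSpace E],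
      ∀ (f : ℂ → E) (M : ℝ),
        ContinuousOn f closedAnnulus → DifferentiableOn ℂ f openAnnulus →
        (∀ z ∈ closedAnnulus, ‖f z‖ ≤ M) →
        ∃ g : ℂ → E,
          ContinuousOn g {z : ℂ | ‖z‖ ≤ Real.exp 1} ∧
          (∀ z : ℂ, ‖z‖ < Real.exp 1 →
            HasSum (fun k : ℕ => z ^ k • fourierLaurent f (k : ℤ)) (g z)) ∧
          ∀ z : ℂ, ‖z‖ ≤ Real.exp 1 → ‖g z‖ ≤ C * M := by
  refine ⟨4, fun E _ _ _ f M hc hd hM => ⟨rieszProjection f, ?_,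
    fun z hz => hasSum_rieszProjection hc hd hz, fun z hz => norm_rieszProjection_le hc hd hM hz⟩⟩
  exact (continuousOn_rieszProjection hc hd).mono fun z hz => mem_closedBall_zero_iff.2 hz
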